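/- arXiv:2202.12869 — 4 statements merged into one kernel-verified Lean document; each statement's English description precedes it below -/
import Mathlib

section
/- For every a ∈ ℂ and every (z,w) ∈ ℂ × ℂ with D := 1 − 2i·conj(a)·z − i·|a|²·w ≠ 0, the identity Im(w/D) − |(z + a·w)/D|² = (Im w − |z|²)/|D|² holds; consequently the holomorphic map σ_a(z,w) = ((z + a·w)/D, w/D) maps the Heisenberg sphere ℍ into itself (these are the flows of the isotropy generators v1 = (w+2iz²)∂_z + 2izw ∂_w and v2 = (iw+2z²)∂_z + 2zw ∂_w). -/
open Complex

/-- For every `a ∈ ℂ` and `(z,w)` with `D = 1 − 2i·conj(a)·z − i·|a|²·w ≠ 0`, one has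
`Im(w/D) − |(z + a·w)/D|² = (Im w − |z|²)/|D|²`; consequently the holomorphic map
`σ_a(z,w) = ((z + a·w)/D, w/D)` maps the Heisenberg sphere into itself. -/
theorem heisenberg_isotropy_flow_invariance :
    ∀ a z w D : ℂ,
      D = 1 - 2 * Complex.I * (starRingEnd ℂ) a * z
            - Complex.I * (Complex.normSq a : ℂ) * w →
      D ≠ 0 →
      ((w / D).im - Complex.normSq ((z + a * w) / D)
          = (w.im - Complex.normSq z) / Complex.normSq D) ∧
      (w.im = Complex.normSq z →
        (w / D).im = Complex.normSq ((z + a * w) / D)) := by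
  intro a z w D hD hD0
  have hns : Complex.normSq D ≠ 0 := by
    simpa [Complex.normSq_eq_zero] using hD0
  have h1 : (w / D).im - Complex.normSq ((z + a * w) / D)
      = ((w.im * D.re - w.re * D.im) - Complex.normSq (z + a * w))
          / Complex.normSq D := by
    rw [Complex.div_im, Complex.normSq_div]
    field_simp
  have h2 : (w.im * D.re - w.re * D.im) - Complex.normSq (z + a * w)
      = w.im - Complex.normSq z := by
    subst hD
    simp only [Complex.normSq_apply, Complex.mul_re, Complex.mul_im,
      Complex.sub_re, Complex.sub_im, Complex.add_re, Complex.add_im,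
      Complex.one_re, Complex.one_im, Complex.I_re, Complex.I_im,
      Complex.ofReal_re, Complex.ofReal_im, Complex.conj_re, Complex.conj_im,
      Complex.re_ofNat, Complex.im_ofNat]
    ring
  have key : (w / D).im - Complex.normSq ((z + a * w) / D)
      = (w.im - Complex.normSq z) / Complex.normSq D := by
    rw [h1, h2]
  refine ⟨key, fun h => ?_⟩
  have := key
  rw [h, sub_self, zero_div, sub_eq_zero] at this
  exact this
end

section
/- Fix a real number a > 1 and let S be the projective hypersurface S = {(z,w) ∈ ℂ × ℂ : 1 + |z|² + |w|² = a·|1 + z² + w²|}. Then S is invariant under each of the following three one-parameter families of holomorphic transformations (t ∈ ℝ): (i) the rotations (z,w) ↦ (z·cos t − w·sin t, z·sin t + w·cos t); (ii) on the set where D := cos t − z·sin t ≠ 0, the maps (z,w) ↦ ( (z·cos t + sin t)/D, w/D ); (iii) on the set where D' := cos t − w·sin t ≠ 0, the maps (z,w) ↦ ( z/D', (w·cos t + sin t)/D' ). These are the flows of the vector fields −w∂_z + z∂_w, (1+z²)∂_z + zw∂_w, and zw∂_z + (1+w²)∂_w respectively. -/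
/-!
In homogeneous coordinates `(Z₀ : Z₁ : Z₂)` with `z = Z₁ / Z₀`, `w = Z₂ / Z₀`, the hypersurface
is the cone `|Z₀|² + |Z₁|² + |Z₂|² = a·|Z₀² + Z₁² + Z₂²|`. A real rotation of two coordinates
preserves both the hermitian form `Σ |Zᵢ|²` and the complex quadratic form `Σ Zᵢ²`, and the
equation is invariant under scaling, so the cone is invariant under `SO(3, ℝ)`. The three
families are the rotations of the planes `(Z₁, Z₂)`, `(Z₀, Z₁)` and `(Z₀, Z₂)` read in the
chart `Z₀ = 1`; the denominators `D`, `D'` are the rotated `Z₀`.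
-/

open Complex

namespace CartanP1

section Rotation

variable {c s : ℝ}

theorem normSq_rotate (hcs : c ^ 2 + s ^ 2 = 1) (u v : ℂ) :
    normSq (u * c - v * s) + normSq (u * s + v * c) = normSq u + normSq v := by
  simp only [normSq_apply, sub_re, sub_im, add_re, add_im, re_mul_ofReal, im_mul_ofReal]
  linear_combination (u.re ^ 2 + u.im ^ 2 + v.re ^ 2 + v.im ^ 2) * hcs

theorem sq_rotate (hcs : c ^ 2 + s ^ 2 = 1) (u v : ℂ) :
    (u * c - v * s) ^ 2 + (u * s + v * c) ^ 2 = u ^ 2 + v ^ 2 := by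
  have hcs' : (c : ℂ) ^ 2 + (s : ℂ) ^ 2 = 1 := by exact_mod_cast hcs
  linear_combination (u ^ 2 + v ^ 2) * hcs'

end Rotation

def IsOn (a : ℝ) (z₀ z₁ z₂ : ℂ) : Prop :=
  normSq z₀ + normSq z₁ + normSq z₂ = a * ‖z₀ ^ 2 + z₁ ^ 2 + z₂ ^ 2‖

variable {a : ℝ} {z₀ z₁ z₂ : ℂ}

theorem isOn_one_iff {z w : ℂ} :
    IsOn a 1 z w ↔ 1 + normSq z + normSq w = a * ‖1 + z ^ 2 + w ^ 2‖ := by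
  simp [IsOn]

theorem isOn_div_iff {d : ℂ} (hd : d ≠ 0) :
    IsOn a (z₀ / d) (z₁ / d) (z₂ / d) ↔ IsOn a z₀ z₁ z₂ := by
  have hnd : 0 < normSq d := normSq_pos.mpr hd
  have hform : (z₀ / d) ^ 2 + (z₁ / d) ^ 2 + (z₂ / d) ^ 2 = (z₀ ^ 2 + z₁ ^ 2 + z₂ ^ 2) / d ^ 2 := by
    ring
  rw [IsOn, IsOn, hform, norm_div, norm_pow, Complex.sq_norm, normSq_div, normSq_div, normSq_div,
    ← add_div, ← add_div, mul_div_assoc', div_left_inj' hnd.ne']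

variable {c s : ℝ}

theorem isOn_rotate₀₁ (hcs : c ^ 2 + s ^ 2 = 1) :
    IsOn a (z₀ * c - z₁ * s) (z₀ * s + z₁ * c) z₂ ↔ IsOn a z₀ z₁ z₂ := by
  rw [IsOn, IsOn, normSq_rotate hcs, sq_rotate hcs]

theorem isOn_rotate₀₂ (hcs : c ^ 2 + s ^ 2 = 1) :
    IsOn a (z₀ * c - z₂ * s) z₁ (z₀ * s + z₂ * c) ↔ IsOn a z₀ z₁ z₂ := by
  rw [IsOn, IsOn, add_right_comm, normSq_rotate hcs, add_right_comm (_ ^ 2), sq_rotate hcs,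
    add_right_comm, add_right_comm (_ ^ 2)]

theorem isOn_rotate₁₂ (hcs : c ^ 2 + s ^ 2 = 1) :
    IsOn a z₀ (z₁ * c - z₂ * s) (z₁ * s + z₂ * c) ↔ IsOn a z₀ z₁ z₂ := by
  rw [IsOn, IsOn, add_assoc, normSq_rotate hcs, add_assoc (_ ^ 2), sq_rotate hcs,
    ← add_assoc, ← add_assoc]

end CartanP1

open CartanP1 in
theorem projective_p1_symmetry_general (a : ℝ) :
    (∀ (t : ℝ) (z w : ℂ),
      1 + Complex.normSq z + Complex.normSq w
          = a * Norm.norm (1 + z ^ 2 + w ^ 2) →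
      1 + Complex.normSq (z * (Real.cos t : ℂ) - w * (Real.sin t : ℂ))
          + Complex.normSq (z * (Real.sin t : ℂ) + w * (Real.cos t : ℂ))
        = a * Norm.norm (1 + (z * (Real.cos t : ℂ) - w * (Real.sin t : ℂ)) ^ 2
              + (z * (Real.sin t : ℂ) + w * (Real.cos t : ℂ)) ^ 2)) ∧
    (∀ (t : ℝ) (z w : ℂ),
      1 + Complex.normSq z + Complex.normSq w
          = a * Norm.norm (1 + z ^ 2 + w ^ 2) →
      (Real.cos t : ℂ) - z * (Real.sin t : ℂ) ≠ 0 →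
      1 + Complex.normSq ((z * (Real.cos t : ℂ) + (Real.sin t : ℂ))
              / ((Real.cos t : ℂ) - z * (Real.sin t : ℂ)))
          + Complex.normSq (w / ((Real.cos t : ℂ) - z * (Real.sin t : ℂ)))
        = a * Norm.norm (1
              + ((z * (Real.cos t : ℂ) + (Real.sin t : ℂ))
                  / ((Real.cos t : ℂ) - z * (Real.sin t : ℂ))) ^ 2
              + (w / ((Real.cos t : ℂ) - z * (Real.sin t : ℂ))) ^ 2)) ∧
    (∀ (t : ℝ) (z w : ℂ),
      1 + Complex.normSq z + Complex.normSq w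
          = a * Norm.norm (1 + z ^ 2 + w ^ 2) →
      (Real.cos t : ℂ) - w * (Real.sin t : ℂ) ≠ 0 →
      1 + Complex.normSq (z / ((Real.cos t : ℂ) - w * (Real.sin t : ℂ)))
          + Complex.normSq ((w * (Real.cos t : ℂ) + (Real.sin t : ℂ))
              / ((Real.cos t : ℂ) - w * (Real.sin t : ℂ)))
        = a * Norm.norm (1
              + (z / ((Real.cos t : ℂ) - w * (Real.sin t : ℂ))) ^ 2
              + ((w * (Real.cos t : ℂ) + (Real.sin t : ℂ))
                  / ((Real.cos t : ℂ) - w * (Real.sin t : ℂ))) ^ 2)) := by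
  refine ⟨fun t z w h => ?_, fun t z w h hD => ?_, fun t z w h hD => ?_⟩
  all_goals
    have hcs := Real.cos_sq_add_sin_sq t
    rw [← isOn_one_iff] at h ⊢
  · exact (isOn_rotate₁₂ hcs).mpr h
  · have hrot := (isOn_rotate₀₁ hcs).mpr h
    rw [one_mul, one_mul, add_comm, ← isOn_div_iff hD, div_self hD] at hrot
    exact hrot
  · have hrot := (isOn_rotate₀₂ hcs).mpr h
    rw [one_mul, one_mul, add_comm, ← isOn_div_iff hD, div_self hD] at hrot
    exact hrot

/-- Cartan's projective hypersurface of type (p1),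
`S = {1 + |z|² + |w|² = a·|1 + z² + w²|}` with `a > 1`, is invariant under the three
one-parameter families of holomorphic transformations that are the flows of
`−w∂_z + z∂_w`, `(1+z²)∂_z + zw∂_w`, and `zw∂_z + (1+w²)∂_w`, respectively. -/
theorem projective_p1_symmetry (a : ℝ) (ha : 1 < a) :
    (∀ (t : ℝ) (z w : ℂ),
      1 + Complex.normSq z + Complex.normSq w
          = a * Norm.norm (1 + z ^ 2 + w ^ 2) →
      1 + Complex.normSq (z * (Real.cos t : ℂ) - w * (Real.sin t : ℂ))
          + Complex.normSq (z * (Real.sin t : ℂ) + w * (Real.cos t : ℂ))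
        = a * Norm.norm (1 + (z * (Real.cos t : ℂ) - w * (Real.sin t : ℂ)) ^ 2
              + (z * (Real.sin t : ℂ) + w * (Real.cos t : ℂ)) ^ 2)) ∧
    (∀ (t : ℝ) (z w : ℂ),
      1 + Complex.normSq z + Complex.normSq w
          = a * Norm.norm (1 + z ^ 2 + w ^ 2) →
      (Real.cos t : ℂ) - z * (Real.sin t : ℂ) ≠ 0 →
      1 + Complex.normSq ((z * (Real.cos t : ℂ) + (Real.sin t : ℂ))
              / ((Real.cos t : ℂ) - z * (Real.sin t : ℂ)))
          + Complex.normSq (w / ((Real.cos t : ℂ) - z * (Real.sin t : ℂ)))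
        = a * Norm.norm (1
              + ((z * (Real.cos t : ℂ) + (Real.sin t : ℂ))
                  / ((Real.cos t : ℂ) - z * (Real.sin t : ℂ))) ^ 2
              + (w / ((Real.cos t : ℂ) - z * (Real.sin t : ℂ))) ^ 2)) ∧
    (∀ (t : ℝ) (z w : ℂ),
      1 + Complex.normSq z + Complex.normSq w
          = a * Norm.norm (1 + z ^ 2 + w ^ 2) →
      (Real.cos t : ℂ) - w * (Real.sin t : ℂ) ≠ 0 →
      1 + Complex.normSq (z / ((Real.cos t : ℂ) - w * (Real.sin t : ℂ)))
          + Complex.normSq ((w * (Real.cos t : ℂ) + (Real.sin t : ℂ))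
              / ((Real.cos t : ℂ) - w * (Real.sin t : ℂ)))
        = a * Norm.norm (1
              + (z / ((Real.cos t : ℂ) - w * (Real.sin t : ℂ))) ^ 2
              + ((w * (Real.cos t : ℂ) + (Real.sin t : ℂ))
                  / ((Real.cos t : ℂ) - w * (Real.sin t : ℂ))) ^ 2)) :=
  projective_p1_symmetry_general a
end

section
/- Fix a real number a with 0 < |a| < 1 and let S be the projective hypersurface S = {(z,w) ∈ ℂ × ℂ : −1 + |z|² + |w|² = a·|−1 + z² + w²|}. Then S is invariant under each of the following three one-parameter families of holomorphic transformations (t ∈ ℝ): (i) the rotations (z,w) ↦ (z·cos t − w·sin t, z·sin t + w·cos t); (ii) on the set where D := cosh t − z·sinh t ≠ 0, the maps (z,w) ↦ ( (z·cosh t − sinh t)/D, w/D ); (iii) on the set where D' := cosh t − w·sinh t ≠ 0, the maps (z,w) ↦ ( z/D', (w·cosh t − sinh t)/D' ). These are the flows of the vector fields −w∂_z + z∂_w, (−1+z²)∂_z + zw∂_w, and zw∂_z + (−1+w²)∂_w respectively. -/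
open Complex

/-!
Both sides of the defining equation of `S` transform by the same positive factor. The rotations
preserve `|z|² + |w|²` and `z² + w²`. For the maps (ii), with `D = cosh t − z sinh t`, the
identities `|z cosh t − sinh t|² − |D|² = |z|² − 1` and `(z cosh t − sinh t)² − D² = z² − 1`
(both from `cosh² − sinh² = 1`) give `−1 + |z'|² + |w'|² = (−1 + |z|² + |w|²) / |D|²` and
`−1 + z'² + w'² = (−1 + z² + w²) / D²`. The maps (iii) are the maps (ii) with `z` and `w`
exchanged, and `S` is symmetric in `z` and `w`.
-/

def OnCartanP3 (a : ℝ) (z w : ℂ) : Prop :=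
  -1 + normSq z + normSq w = a * ‖-1 + z ^ 2 + w ^ 2‖

theorem onCartanP3_comm {a : ℝ} {z w : ℂ} : OnCartanP3 a z w ↔ OnCartanP3 a w z := by
  unfold OnCartanP3
  rw [add_right_comm, add_right_comm (-1 : ℂ)]

theorem OnCartanP3.of_div {a : ℝ} {z w z' w' D : ℂ}
    (hre : -1 + normSq z' + normSq w' = (-1 + normSq z + normSq w) / normSq D)
    (hcx : -1 + z' ^ 2 + w' ^ 2 = (-1 + z ^ 2 + w ^ 2) / D ^ 2) (h : OnCartanP3 a z w) :
    OnCartanP3 a z' w' := by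
  unfold OnCartanP3 at *
  rw [hre, hcx, h, norm_div, norm_pow, ← normSq_eq_norm_sq, mul_div_assoc]

theorem normSq_rotate (z w : ℂ) {c s : ℝ} (hcs : c ^ 2 + s ^ 2 = 1) :
    normSq (z * c - w * s) + normSq (z * s + w * c) = normSq z + normSq w := by
  simp only [normSq_apply, sub_re, sub_im, add_re, add_im, mul_re, mul_im, ofReal_re, ofReal_im]
  linear_combination (z.re ^ 2 + z.im ^ 2 + w.re ^ 2 + w.im ^ 2) * hcs

theorem OnCartanP3.rotate {a : ℝ} {z w : ℂ} (h : OnCartanP3 a z w) {c s : ℝ}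
    (hcs : c ^ 2 + s ^ 2 = 1) : OnCartanP3 a (z * c - w * s) (z * s + w * c) := by
  have hcs' : (c : ℂ) ^ 2 + (s : ℂ) ^ 2 = 1 := by exact_mod_cast hcs
  refine h.of_div (D := 1) ?_ ?_
  · rw [normSq_one, div_one, add_assoc, normSq_rotate z w hcs, add_assoc]
  · rw [one_pow, div_one]
    linear_combination (z ^ 2 + w ^ 2) * hcs'

theorem normSq_boost_sub (z : ℂ) {c s : ℝ} (hcs : c ^ 2 - s ^ 2 = 1) :
    normSq (z * c - s) - normSq (c - z * s) = normSq z - 1 := by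
  simp only [normSq_apply, sub_re, sub_im, mul_re, mul_im, ofReal_re, ofReal_im]
  linear_combination (z.re ^ 2 + z.im ^ 2 - 1) * hcs

theorem OnCartanP3.boost {a : ℝ} {z w : ℂ} (h : OnCartanP3 a z w) {c s : ℝ}
    (hcs : c ^ 2 - s ^ 2 = 1) (hD : (c : ℂ) - z * s ≠ 0) :
    OnCartanP3 a ((z * c - s) / (c - z * s)) (w / (c - z * s)) := by
  have hcs' : (c : ℂ) ^ 2 - (s : ℂ) ^ 2 = 1 := by exact_mod_cast hcs
  refine h.of_div (D := c - z * s) ?_ ?_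
  · have hDn : normSq ((c : ℂ) - z * s) ≠ 0 := normSq_eq_zero.not.mpr hD
    rw [normSq_div, normSq_div]
    field_simp
    linear_combination normSq_boost_sub z hcs
  · field_simp
    linear_combination (z ^ 2 - 1) * hcs'

theorem projective_p3_symmetry_general (a : ℝ) :
    (∀ (t : ℝ) (z w : ℂ),
      -1 + Complex.normSq z + Complex.normSq w
          = a * ‖-1 + z ^ 2 + w ^ 2‖ →
      -1 + Complex.normSq (z * (Real.cos t : ℂ) - w * (Real.sin t : ℂ))
          + Complex.normSq (z * (Real.sin t : ℂ) + w * (Real.cos t : ℂ))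
        = a * ‖-1 + (z * (Real.cos t : ℂ) - w * (Real.sin t : ℂ)) ^ 2
              + (z * (Real.sin t : ℂ) + w * (Real.cos t : ℂ)) ^ 2‖) ∧
    (∀ (t : ℝ) (z w : ℂ),
      -1 + Complex.normSq z + Complex.normSq w
          = a * ‖-1 + z ^ 2 + w ^ 2‖ →
      (Real.cosh t : ℂ) - z * (Real.sinh t : ℂ) ≠ 0 →
      -1 + Complex.normSq ((z * (Real.cosh t : ℂ) - (Real.sinh t : ℂ))
              / ((Real.cosh t : ℂ) - z * (Real.sinh t : ℂ)))
          + Complex.normSq (w / ((Real.cosh t : ℂ) - z * (Real.sinh t : ℂ)))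
        = a * ‖-1
              + ((z * (Real.cosh t : ℂ) - (Real.sinh t : ℂ))
                  / ((Real.cosh t : ℂ) - z * (Real.sinh t : ℂ))) ^ 2
              + (w / ((Real.cosh t : ℂ) - z * (Real.sinh t : ℂ))) ^ 2‖) ∧
    (∀ (t : ℝ) (z w : ℂ),
      -1 + Complex.normSq z + Complex.normSq w
          = a * ‖-1 + z ^ 2 + w ^ 2‖ →
      (Real.cosh t : ℂ) - w * (Real.sinh t : ℂ) ≠ 0 →
      -1 + Complex.normSq (z / ((Real.cosh t : ℂ) - w * (Real.sinh t : ℂ)))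
          + Complex.normSq ((w * (Real.cosh t : ℂ) - (Real.sinh t : ℂ))
              / ((Real.cosh t : ℂ) - w * (Real.sinh t : ℂ)))
        = a * ‖-1
              + (z / ((Real.cosh t : ℂ) - w * (Real.sinh t : ℂ))) ^ 2
              + ((w * (Real.cosh t : ℂ) - (Real.sinh t : ℂ))
                  / ((Real.cosh t : ℂ) - w * (Real.sinh t : ℂ))) ^ 2‖) := by
  have hrot (t : ℝ) : Real.cos t ^ 2 + Real.sin t ^ 2 = 1 := Real.cos_sq_add_sin_sq t
  have hboost (t : ℝ) : Real.cosh t ^ 2 - Real.sinh t ^ 2 = 1 := Real.cosh_sq_sub_sinh_sq t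
  refine ⟨fun t z w h => OnCartanP3.rotate h (hrot t),
    fun t z w h hD => OnCartanP3.boost h (hboost t) hD, fun t z w h hD => ?_⟩
  have hswap : OnCartanP3 a w z := onCartanP3_comm.mp h
  exact onCartanP3_comm.mp (hswap.boost (hboost t) hD)

/-- Cartan's projective hypersurface of type (p3),
`S = {−1 + |z|² + |w|² = a·|−1 + z² + w²|}` with `0 < |a| < 1`, is invariant under the
three one-parameter families of holomorphic transformations that are the flows of
`−w∂_z + z∂_w`, `(−1+z²)∂_z + zw∂_w`, and `zw∂_z + (−1+w²)∂_w`, respectively. -/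
theorem projective_p3_symmetry (a : ℝ) (ha0 : 0 < |a|) (ha1 : |a| < 1) :
    (∀ (t : ℝ) (z w : ℂ),
      -1 + Complex.normSq z + Complex.normSq w
          = a * ‖-1 + z ^ 2 + w ^ 2‖ →
      -1 + Complex.normSq (z * (Real.cos t : ℂ) - w * (Real.sin t : ℂ))
          + Complex.normSq (z * (Real.sin t : ℂ) + w * (Real.cos t : ℂ))
        = a * ‖-1 + (z * (Real.cos t : ℂ) - w * (Real.sin t : ℂ)) ^ 2
              + (z * (Real.sin t : ℂ) + w * (Real.cos t : ℂ)) ^ 2‖) ∧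
    (∀ (t : ℝ) (z w : ℂ),
      -1 + Complex.normSq z + Complex.normSq w
          = a * ‖-1 + z ^ 2 + w ^ 2‖ →
      (Real.cosh t : ℂ) - z * (Real.sinh t : ℂ) ≠ 0 →
      -1 + Complex.normSq ((z * (Real.cosh t : ℂ) - (Real.sinh t : ℂ))
              / ((Real.cosh t : ℂ) - z * (Real.sinh t : ℂ)))
          + Complex.normSq (w / ((Real.cosh t : ℂ) - z * (Real.sinh t : ℂ)))
        = a * ‖-1
              + ((z * (Real.cosh t : ℂ) - (Real.sinh t : ℂ))
                  / ((Real.cosh t : ℂ) - z * (Real.sinh t : ℂ))) ^ 2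
              + (w / ((Real.cosh t : ℂ) - z * (Real.sinh t : ℂ))) ^ 2‖) ∧
    (∀ (t : ℝ) (z w : ℂ),
      -1 + Complex.normSq z + Complex.normSq w
          = a * ‖-1 + z ^ 2 + w ^ 2‖ →
      (Real.cosh t : ℂ) - w * (Real.sinh t : ℂ) ≠ 0 →
      -1 + Complex.normSq (z / ((Real.cosh t : ℂ) - w * (Real.sinh t : ℂ)))
          + Complex.normSq ((w * (Real.cosh t : ℂ) - (Real.sinh t : ℂ))
              / ((Real.cosh t : ℂ) - w * (Real.sinh t : ℂ)))
        = a * ‖-1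
              + (z / ((Real.cosh t : ℂ) - w * (Real.sinh t : ℂ))) ^ 2
              + ((w * (Real.cosh t : ℂ) - (Real.sinh t : ℂ))
                  / ((Real.cosh t : ℂ) - w * (Real.sinh t : ℂ))) ^ 2‖) :=
  projective_p3_symmetry_general a
end

section
/- Let ξ : ℂ × ℂ → ℂ be an entire holomorphic function and suppose there are constants λ₁, λ₂, μ₁, μ₂ ∈ ℂ with (λ₁, λ₂) ≠ (0,0) such that for all (z,w) ∈ ℂ × ℂ: ∂ξ/∂z (z,w) = λ₁·ξ(z,w) + μ₁ and ∂ξ/∂w (z,w) = λ₂·ξ(z,w) + μ₂. Then λ₁·μ₂ = λ₂·μ₁, and there exist constants γ, c ∈ ℂ such that ξ(z,w) = γ·exp(λ₁·z + λ₂·w) + c for all (z,w). -/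
/-! With `L = λ₁ dz + λ₂ dw` and `M = μ₁ dz + μ₂ dw` the hypotheses say `dξ = ξ L + M`, so
`d²ξ (v, w) = (ξ L v + M v) L w`. Symmetry of the second derivative forces `M v L w = M w L v`,
which at `v = (1, 0)`, `w = (0, 1)` is `λ₁μ₂ = λ₂μ₁`; since `L ≠ 0` it also gives `M = c L`.
Then `d(ξ + c) = (ξ + c) L`, so `(ξ + c) e^{-L}` has zero derivative and is constant. -/

open Complex

namespace ContinuousLinearMap

theorem eq_smul_fst_add_smul_snd {R : Type*} [CommSemiring R] [TopologicalSpace R]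
    [IsTopologicalSemiring R] (f : R × R →L[R] R) :
    f = f (1, 0) • fst R R R + f (0, 1) • snd R R R := by
  ext <;> simp

theorem exists_eq_smul_of_apply_mul_apply_comm {K E : Type*} [Field K] [TopologicalSpace K]
    [IsTopologicalRing K] [AddCommGroup E] [TopologicalSpace E] [Module K E]
    {L M : E →L[K] K} (hL : L ≠ 0) (h : ∀ v w, M v * L w = M w * L v) : ∃ c : K, M = c • L := by
  obtain ⟨w, hw⟩ : ∃ w, L w ≠ 0 := by
    by_contra! h0
    exact hL (ext h0)
  refine ⟨M w / L w, ext fun v => ?_⟩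
  rw [smul_apply, smul_eq_mul, div_mul_eq_mul_div, eq_div_iff hw, h]

end ContinuousLinearMap

open ContinuousLinearMap

variable {E : Type*} [NormedAddCommGroup E]

theorem apply_mul_apply_comm_of_hasFDerivAt_smul_add {𝕜 : Type*} [RCLike 𝕜] [NormedSpace 𝕜 E]
    {ξ : E → 𝕜} {L M : E →L[𝕜] 𝕜} (hξ : ∀ p, HasFDerivAt ξ (ξ p • L + M) p) (v w : E) :
    M v * L w = M w * L v := by
  have hξ' : HasFDerivAt (fun q => ξ q • L + M) ((ξ 0 • L + M).smulRight L) 0 :=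
    ((hξ 0).smul_const L).add_const M
  have := second_derivative_symmetric hξ hξ' v w
  simp only [smulRight_apply, add_apply, smul_apply, smul_eq_mul] at this
  linear_combination this

theorem eq_mul_cexp_of_hasFDerivAt_smul [NormedSpace ℂ E] {g : E → ℂ} {L : E →L[ℂ] ℂ}
    (hg : ∀ p, HasFDerivAt g (g p • L) p) (p : E) : g p = g 0 * exp (L p) := by
  have hF : ∀ q, HasFDerivAt (fun q => g q * exp (-L q)) (0 : E →L[ℂ] ℂ) q := by
    intro q
    refine ((hg q).mul (L.hasFDerivAt (x := q)).neg.cexp).congr_fderiv ?_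
    ext v
    simp only [add_apply, smul_apply, neg_apply, zero_apply, smul_eq_mul]
    ring
  have := is_const_of_fderiv_eq_zero (fun q => (hF q).differentiableAt) (fun q => (hF q).fderiv) p 0
  simp only [map_zero, neg_zero, Complex.exp_zero, mul_one] at this
  rw [← this, mul_assoc, ← Complex.exp_add, neg_add_cancel, Complex.exp_zero, mul_one]

/-- If `ξ : ℂ × ℂ → ℂ` is entire and satisfies `ξ_z = λ₁ξ + μ₁`, `ξ_w = λ₂ξ + μ₂`
with `(λ₁,λ₂) ≠ (0,0)`, then `λ₁μ₂ = λ₂μ₁` and `ξ(z,w) = γ·e^{λ₁z+λ₂w} + c` for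
some constants `γ, c ∈ ℂ`. -/
theorem exponential_form_of_affinely_self_derivative
    (ξ : ℂ × ℂ → ℂ) (hξ : Differentiable ℂ ξ)
    (lam₁ lam₂ mu₁ mu₂ : ℂ) (hlam : (lam₁, lam₂) ≠ (0, 0))
    (h₁ : ∀ p : ℂ × ℂ, fderiv ℂ ξ p (1, 0) = lam₁ * ξ p + mu₁)
    (h₂ : ∀ p : ℂ × ℂ, fderiv ℂ ξ p (0, 1) = lam₂ * ξ p + mu₂) :
    lam₁ * mu₂ = lam₂ * mu₁ ∧
    ∃ γ c : ℂ, ∀ p : ℂ × ℂ,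
      ξ p = γ * Complex.exp (lam₁ * p.1 + lam₂ * p.2) + c := by
  set L : ℂ × ℂ →L[ℂ] ℂ := lam₁ • fst ℂ ℂ ℂ + lam₂ • snd ℂ ℂ ℂ
  set M : ℂ × ℂ →L[ℂ] ℂ := mu₁ • fst ℂ ℂ ℂ + mu₂ • snd ℂ ℂ ℂ
  have hD : ∀ p, HasFDerivAt ξ (ξ p • L + M) p := by
    intro p
    convert (hξ p).hasFDerivAt using 1
    rw [eq_smul_fst_add_smul_snd (fderiv ℂ ξ p), h₁, h₂]
    module
  have hcomm := apply_mul_apply_comm_of_hasFDerivAt_smul_add hD (1, 0) (0, 1)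
  simp only [L, M, add_apply, smul_apply, coe_fst', coe_snd', smul_eq_mul] at hcomm
  have hL0 : L ≠ 0 := by
    intro h0
    exact hlam (Prod.ext (by simpa [L] using DFunLike.congr_fun h0 (1, 0))
      (by simpa [L] using DFunLike.congr_fun h0 (0, 1)))
  obtain ⟨c, hc⟩ := exists_eq_smul_of_apply_mul_apply_comm hL0
    (apply_mul_apply_comm_of_hasFDerivAt_smul_add hD)
  have hg : ∀ p, HasFDerivAt (fun q => ξ q + c) ((ξ p + c) • L) p := by
    intro p
    exact ((hD p).add_const c).congr_fderiv (by rw [hc]; module)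
  refine ⟨by linear_combination -hcomm, ξ 0 + c, -c, fun p => ?_⟩
  have := eq_mul_cexp_of_hasFDerivAt_smul hg p
  simp only [L, add_apply, smul_apply, coe_fst', coe_snd', smul_eq_mul] at this
  linear_combination this
end
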